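/- Let 𝒯 = {(P_1,B_1),...,(P_r,B_r)} be a finite set of templates such that for every i the binary string B_i has at most k zeros, and let σ be a pattern of length l > 0. If there exists an n such that S_{n,𝒯} contains a permutation which contains σ as a pattern, then there also exists an m ≤ (l-1)(k+1)+1 such that S_{m,𝒯} contains a permutation which contains σ as a pattern. -/

import Mathlib

/-- A *permutation word* of length `n`: a list that is a rearrangement of `1, 2, ..., n`
(where `n` is its length). -/
def IsPermWord (w : List ℕ) : Prop := w.Perm (List.range' 1 w.length)

/-- Two words are *order-isomorphic*: they have the same length and corresponding
entries compare in the same way. -/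
def OrderIsoWord (u v : List ℕ) : Prop :=
  u.length = v.length ∧
    ∀ (i j : ℕ) (hi : i < u.length) (hj : j < u.length)
      (hi' : i < v.length) (hj' : j < v.length),
      (u[i]'hi < u[j]'hj ↔ v[i]'hi' < v[j]'hj')

/-- `w` contains a copy of the pattern `σ`: some subsequence of `w` (given by increasing
indices) is order-isomorphic to `σ`. -/
def ContainsPattern (w σ : List ℕ) : Prop :=
  ∃ s : List ℕ, s.Sublist w ∧ OrderIsoWord s σ

/-- `w` avoids the pattern `σ`: it contains no copy of `σ`. -/
def AvoidsPattern (w σ : List ℕ) : Prop := ¬ ContainsPattern w σ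

/-- Membership in the family of permutation-word sets `S_{n,𝒯}` generated by a finite
set `𝒯` of templates (the length index `n` is just the length of the word).
`InS Ts w` holds iff `w` is the empty word, a single-letter word, or, for some template
`(P, B) ∈ Ts`, the concatenation of subwords `W_1, ..., W_t` (`t = |P|`, total length at
least `2`) such that: whenever `p_i > p_j` every element of `W_i` exceeds every element of
`W_j`; each `W_i` is order-isomorphic to a permutation word `V_i` that again satisfies
`InS`; and whenever `b_i = 0` the subword `W_i` has exactly one element. -/
inductive InS (Ts : List (List ℕ × List Bool)) : List ℕ → Prop where
  | nil : InS Ts []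
  | single (x : ℕ) : InS Ts [x]
  | join (P : List ℕ) (B : List Bool) (hT : (P, B) ∈ Ts)
      (Ws Vs : List (List ℕ)) (hlen : Ws.length = P.length)
      (hVs : Vs.length = Ws.length)
      (h2 : 2 ≤ Ws.flatten.length)
      (horder : ∀ (i j : ℕ) (hi : i < Ws.length) (hj : j < Ws.length),
          P[j]'(by omega) < P[i]'(by omega) →
          ∀ x ∈ Ws[i]'hi, ∀ y ∈ Ws[j]'hj, y < x)
      (hiso : ∀ (i : ℕ) (hi : i < Ws.length),
          IsPermWord (Vs[i]'(by omega)) ∧ OrderIsoWord (Ws[i]'hi) (Vs[i]'(by omega)))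
      (hrec : ∀ (i : ℕ) (hi : i < Vs.length), InS Ts (Vs[i]'hi))
      (hzero : ∀ (i : ℕ) (hi : i < Ws.length) (hb : i < B.length),
          B[i]'hb = false → (Ws[i]'hi).length = 1) :
      InS Ts Ws.flatten

/-- The set `S_{n,𝒯}` of permutation words of length `n` generated by the finite set
`Ts` of templates. -/
def Sset (Ts : List (List ℕ × List Bool)) (n : ℕ) : Set (List ℕ) :=
  {w | w.length = n ∧ IsPermWord w ∧ InS Ts w}


namespace TPW


theorem oiw_symm {u v : List ℕ} (h : OrderIsoWord u v) : OrderIsoWord v u :=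
  ⟨h.1.symm, fun i j hi hj hi' hj' => (h.2 i j hi' hj' hi hj).symm⟩

theorem oiw_trans {u v w : List ℕ} (h1 : OrderIsoWord u v) (h2 : OrderIsoWord v w) :
    OrderIsoWord u w := by
  refine ⟨h1.1.trans h2.1, fun i j hi hj hi' hj' => ?_⟩
  have hiv : i < v.length := h1.1 ▸ hi
  have hjv : j < v.length := h1.1 ▸ hj
  exact (h1.2 i j hi hj hiv hjv).trans (h2.2 i j hiv hjv hi' hj')

/-- order iso via membership in zip -/
def ZC (u v : List ℕ) : Prop :=
  ∀ p ∈ u.zip v, ∀ q ∈ u.zip v, (p.1 < q.1 ↔ p.2 < q.2)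

theorem oiw_iff_zc {u v : List ℕ} (hl : u.length = v.length) :
    OrderIsoWord u v ↔ ZC u v := by
  constructor
  · rintro ⟨-, h⟩ p hp q hq
    rw [List.mem_iff_getElem] at hp hq
    obtain ⟨i, hi, rfl⟩ := hp
    obtain ⟨j, hj, rfl⟩ := hq
    rw [List.length_zip] at hi hj
    rw [List.getElem_zip, List.getElem_zip]
    exact h i j (by omega) (by omega) (by omega) (by omega)
  · intro h
    refine ⟨hl, fun i j hi hj hi' hj' => ?_⟩
    have hp : (u[i], v[i]) ∈ u.zip v := by
      rw [List.mem_iff_getElem]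
      exact ⟨i, by rw [List.length_zip]; omega, by rw [List.getElem_zip]⟩
    have hq : (u[j], v[j]) ∈ u.zip v := by
      rw [List.mem_iff_getElem]
      exact ⟨j, by rw [List.length_zip]; omega, by rw [List.getElem_zip]⟩
    exact h _ hp _ hq

theorem oiw_shift (u : List ℕ) (c : ℕ) : OrderIsoWord (u.map (fun x => c + x)) u := by
  refine ⟨by simp, fun i j hi hj hi' hj' => ?_⟩
  simp only [List.getElem_map]
  omega

/-- transfer a sublist through an order isomorphism -/
theorem oiw_sublist {w v s : List ℕ} (h : OrderIsoWord w v) (hs : s.Sublist w) :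
    ∃ s', s'.Sublist v ∧ OrderIsoWord s s' := by
  obtain ⟨is, rfl, hpw⟩ := List.sublist_eq_map_getElem hs
  have hlen : w.length = v.length := h.1
  refine ⟨List.map (fun x : Fin w.length => v[(x : ℕ)]'(by omega)) is, ?_, ?_, ?_⟩
  · have : (List.map (fun x : Fin w.length => v[(x : ℕ)]'(by omega)) is)
        = List.map (fun x : Fin v.length => v[(x : ℕ)]) (is.map (Fin.cast hlen)) := by
      simp [List.map_map, Function.comp]
    rw [this]
    apply List.map_getElem_sublist
    exact (List.pairwise_map.mpr (by simpa using hpw))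
  · simp
  · intro i j hi hj hi' hj'
    simp only [List.length_map] at hi hj hi' hj'
    simp only [List.getElem_map]
    exact h.2 _ _ (is[i]).isLt (is[j]).isLt (by omega) (by omega)

theorem permword_mem {u : List ℕ} (h : IsPermWord u) {x : ℕ} (hx : x ∈ u) :
    1 ≤ x ∧ x ≤ u.length := by
  have := (h.mem_iff).mp hx
  rw [List.mem_range'_1] at this
  omega

theorem permword_exists {u : List ℕ} (h : IsPermWord u) {v : ℕ} (h1 : 1 ≤ v)
    (h2 : v ≤ u.length) : ∃ (i : ℕ) (hi : i < u.length), u[i]'hi = v := by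
  have : v ∈ u := h.mem_iff.mpr (List.mem_range'_1.mpr (by omega))
  rw [List.mem_iff_getElem] at this
  exact this

theorem permword_nodup {u : List ℕ} (h : IsPermWord u) : u.Nodup :=
  h.nodup_iff.mpr List.nodup_range'

theorem permword_one : IsPermWord [1] := by simp [IsPermWord, List.range']

/-- decompose a sublist of a flatten blockwise -/
theorem sublist_flatten_decomp {α : Type*} :
    ∀ (L : List (List α)) (s : List α), s.Sublist L.flatten →
    ∃ ss : List (List α), ss.length = L.length ∧
      (∀ (i : ℕ) (h1 : i < ss.length) (h2 : i < L.length), (ss[i]'h1).Sublist (L[i]'h2)) ∧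
      ss.flatten = s := by
  intro L
  induction L with
  | nil => intro s hs; simp at hs; exact ⟨[], by simp [hs]⟩
  | cons W L ih =>
    intro s hs
    rw [List.flatten_cons, List.sublist_append_iff] at hs
    obtain ⟨s1, s2, rfl, h1, h2⟩ := hs
    obtain ⟨ss, hl, hsub, hfl⟩ := ih s2 h2
    refine ⟨s1 :: ss, by simp [hl], ?_, by simp [hfl]⟩
    rintro (_ | i) hh1 hh2
    · simpa using h1
    · simpa using hsub i (by simpa using hh1) (by simpa using hh2)

/-- blockwise sublists give flatten sublist -/
theorem flatten_sublist {α : Type*} :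
    ∀ (X Y : List (List α)), X.length = Y.length →
    (∀ (i : ℕ) (h1 : i < X.length) (h2 : i < Y.length), (X[i]'h1).Sublist (Y[i]'h2)) →
    X.flatten.Sublist Y.flatten := by
  intro X
  induction X with
  | nil => intro Y hY _; cases Y with
    | nil => simp
    | cons => simp at hY
  | cons x X ih =>
    intro Y hY h
    cases Y with
    | nil => simp at hY
    | cons y Y =>
      simp only [List.flatten_cons]
      refine List.Sublist.append (h 0 (by simp) (by simp)) ?_
      exact ih Y (by simpa using hY) (fun i h1 h2 => by
        exact h (i+1) (by simpa using h1) (by simpa using h2))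

/-- zip of flattens is flatten of zips when block lengths agree -/
theorem zip_flatten {α β : Type*} :
    ∀ (X : List (List α)) (Y : List (List β)), X.length = Y.length →
    (∀ (i : ℕ) (h1 : i < X.length) (h2 : i < Y.length), (X[i]'h1).length = (Y[i]'h2).length) →
    X.flatten.zip Y.flatten = (List.zipWith List.zip X Y).flatten := by
  intro X
  induction X with
  | nil => intro Y hY _; cases Y with
    | nil => simp
    | cons => simp at hY
  | cons x X ih =>
    intro Y hY h
    cases Y with
    | nil => simp at hY
    | cons y Y =>
      simp only [List.flatten_cons, List.zipWith_cons_cons]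
      rw [List.zip_append (show x.length = y.length from h 0 (by simp) (by simp))]
      rw [ih Y (by simpa using hY) (fun i h1 h2 => by
        exact h (i+1) (by simpa using h1) (by simpa using h2))]

theorem sum_ind_false : ∀ (n : ℕ) (f : Fin n → Bool),
    (∑ i : Fin n, (if f i = false then 1 else 0)) = (List.ofFn f).count false := by
  intro n
  induction n with
  | zero => simp
  | succ n ih =>
    intro f
    rw [Fin.sum_univ_succ, List.ofFn_succ, List.count_cons, ih]
    cases f 0 <;> simp [Nat.add_comm]

theorem sum_map_get {α : Type*} (l : List α) (f : α → ℕ) :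
    (l.map f).sum = ∑ i : Fin l.length, f (l.get i) := by
  conv_lhs => rw [← List.ofFn_get l]
  rw [List.map_ofFn, List.sum_ofFn]
  rfl

variable {t : ℕ} (PF : Fin t → ℕ) (m : Fin t → ℕ)

/-- the offset of block `i` -/
def off (i : Fin t) : ℕ := ∑ j ∈ Finset.univ.filter (fun j : Fin t => PF j < PF i), m j

theorem off_add (hinj : Function.Injective PF) (i : Fin t) :
    off PF m i + m i = ∑ j ∈ Finset.univ.filter (fun j : Fin t => PF j ≤ PF i), m j := by
  have h1 : Finset.univ.filter (fun j : Fin t => PF j ≤ PF i)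
      = insert i (Finset.univ.filter (fun j : Fin t => PF j < PF i)) := by
    ext x
    simp only [Finset.mem_filter, Finset.mem_univ, true_and, Finset.mem_insert]
    constructor
    · intro hx
      rcases lt_or_eq_of_le hx with h | h
      · exact Or.inr h
      · exact Or.inl (hinj h)
    · rintro (rfl | hx)
      · omega
      · omega
  rw [h1, Finset.sum_insert (by simp), off]
  omega

theorem off_mono (hinj : Function.Injective PF) {i j : Fin t} (hij : PF i < PF j) :
    off PF m i + m i ≤ off PF m j := by
  rw [off_add PF m hinj i]
  apply Finset.sum_le_sum_of_subset
  intro x hx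
  simp only [Finset.mem_filter, Finset.mem_univ, true_and] at hx ⊢
  omega

theorem off_le_total (hinj : Function.Injective PF) (i : Fin t) :
    off PF m i + m i ≤ ∑ j : Fin t, m j := by
  rw [off_add PF m hinj i]
  exact Finset.sum_le_sum_of_subset (Finset.subset_univ _)

/-- existence of the block containing value `a` -/
theorem off_exists (hinj : Function.Injective PF)
    (hub : ∀ i, PF i ≤ t) (hlb : ∀ i, 1 ≤ PF i) (hsurj : ∀ v, 1 ≤ v → v ≤ t → ∃ i, PF i = v)
    {a : ℕ} (ha1 : 1 ≤ a) (ha2 : a ≤ ∑ j : Fin t, m j) :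
    ∃ i, off PF m i < a ∧ a ≤ off PF m i + m i := by
  have ht : 0 < t := by
    by_contra h
    have : (Finset.univ : Finset (Fin t)) = ∅ := by
      apply Finset.univ_eq_empty_iff.mpr
      exact ⟨fun i => absurd i.isLt (by omega)⟩
    rw [this] at ha2
    simp at ha2
    omega
  classical
  set A := Finset.univ.filter (fun i : Fin t => off PF m i < a) with hA
  have hAne : A.Nonempty := by
    obtain ⟨i1, hi1⟩ := hsurj 1 le_rfl ht
    refine ⟨i1, ?_⟩
    simp only [hA, Finset.mem_filter, Finset.mem_univ, true_and]
    have : Finset.univ.filter (fun j : Fin t => PF j < PF i1) = ∅ := by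
      apply Finset.filter_eq_empty_iff.mpr
      intro j _
      have := hlb j
      omega
    rw [off, this]
    simpa using (show 0 < a by omega)
  obtain ⟨i0, hi0A, hi0max⟩ := Finset.exists_max_image A PF hAne
  simp only [hA, Finset.mem_filter, Finset.mem_univ, true_and] at hi0A
  refine ⟨i0, hi0A, ?_⟩
  by_contra hcon
  push_neg at hcon
  rcases Nat.lt_or_ge (PF i0) t with hlt | hge
  · obtain ⟨j1, hj1⟩ := hsurj (PF i0 + 1) (by omega) (by omega)
    have hcj1 : off PF m j1 = off PF m i0 + m i0 := by
      rw [off_add PF m hinj i0, off]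
      apply Finset.sum_congr
      · ext x
        simp only [Finset.mem_filter, Finset.mem_univ, true_and, hj1]
        omega
      · intros; rfl
    have hj1A : j1 ∈ A := by
      simp only [hA, Finset.mem_filter, Finset.mem_univ, true_and, hcj1]
      omega
    have := hi0max j1 hj1A
    omega
  · -- PF i0 = t : top block, off + m = total
    have htop : ∀ j : Fin t, j ≠ i0 → PF j < PF i0 := by
      intro j hj
      have h1 := hub j
      have h2 : PF j ≠ PF i0 := fun h => hj (hinj h)
      omega
    have : off PF m i0 + m i0 = ∑ j : Fin t, m j := by
      rw [off_add PF m hinj i0]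
      apply Finset.sum_congr _ (fun _ _ => rfl)
      ext x
      simp only [Finset.mem_filter, Finset.mem_univ, true_and]
      rcases eq_or_ne x i0 with rfl | hx
      · simp
      · simp [le_of_lt (htop x hx)]
    omega

theorem off_unique (hinj : Function.Injective PF) {a : ℕ} {i j : Fin t}
    (hi : off PF m i < a ∧ a ≤ off PF m i + m i)
    (hj : off PF m j < a ∧ a ≤ off PF m j + m j) : i = j := by
  by_contra hne
  have hPne : PF i ≠ PF j := fun h => hne (hinj h)
  rcases Nat.lt_or_ge (PF i) (PF j) with h | h
  · have := off_mono PF m hinj h; omega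
  · have := off_mono PF m hinj (lt_of_le_of_ne h (Ne.symm hPne) : PF j < PF i); omega

theorem count_range' (a s n : ℕ) : List.count a (List.range' s n)
    = if s ≤ a ∧ a < s + n then 1 else 0 := by
  split
  · exact List.count_eq_one_of_mem (List.nodup_range' (s := s) (n := n)) (List.mem_range'_1.mpr (by omega))
  · exact List.count_eq_zero_of_not_mem (fun h => by rw [List.mem_range'_1] at h; omega)

theorem flatten_length (u : Fin t → List ℕ) (c : Fin t → ℕ) :
    (List.ofFn (fun i => (u i).map (fun x => c i + x))).flatten.length
      = ∑ i : Fin t, (u i).length := by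
  rw [List.length_flatten, List.map_ofFn, List.sum_ofFn]
  simp [Function.comp]

theorem assembled_perm (u : Fin t → List ℕ) (hu : ∀ i, IsPermWord (u i))
    (hm : ∀ i, m i = (u i).length)
    (hinj : Function.Injective PF)
    (hub : ∀ i, PF i ≤ t) (hlb : ∀ i, 1 ≤ PF i)
    (hsurj : ∀ v, 1 ≤ v → v ≤ t → ∃ i, PF i = v) :
    IsPermWord (List.ofFn (fun i => (u i).map (fun x => off PF m i + x))).flatten := by
  have hN : (List.ofFn (fun i => (u i).map (fun x => off PF m i + x))).flatten.length
      = ∑ i : Fin t, m i := by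
    rw [flatten_length]
    exact Finset.sum_congr rfl (fun i _ => (hm i).symm)
  rw [IsPermWord, hN, List.perm_iff_count]
  intro a
  rw [List.count_flatten, List.map_ofFn, List.sum_ofFn]
  have hterm : ∀ i : Fin t, (List.count a ∘ fun i => (u i).map (fun x => off PF m i + x)) i
      = if off PF m i + 1 ≤ a ∧ a < off PF m i + 1 + m i then 1 else 0 := by
    intro i
    have hperm : ((u i).map (fun x => off PF m i + x)).Perm
        (List.range' (off PF m i + 1) (m i)) := by
      have h1 := (hu i).map (fun x => off PF m i + x)
      rw [List.map_add_range' (a := off PF m i) 1 (u i).length 1] at h1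
      rw [hm i]
      exact h1
    simp only [Function.comp]
    rw [hperm.count_eq, count_range']
  rw [Finset.sum_congr rfl (fun i _ => hterm i)]
  rw [count_range']
  by_cases ha : 1 ≤ a ∧ a < 1 + ∑ i : Fin t, m i
  · rw [if_pos ha]
    obtain ⟨i0, hi0⟩ := off_exists PF m hinj hub hlb hsurj ha.1 (by omega)
    rw [Finset.sum_eq_single_of_mem i0 (Finset.mem_univ i0)]
    · rw [if_pos (by omega)]
    · intro j _ hj
      rw [if_neg]
      intro hcon
      exact hj (off_unique PF m hinj ⟨by omega, by omega⟩ hi0)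
  · rw [if_neg ha]
    apply Finset.sum_eq_zero
    intro i _
    rw [if_neg]
    intro hcon
    have h1 := off_le_total PF m hinj i
    omega

/-- the key lemma: any word in `InS` containing a pattern `τ` can be replaced by a
permutation word in `InS` of length at most `(|τ|-1)(k+1)+1` containing `τ`. -/
theorem key (Ts : List (List ℕ × List Bool)) (k : ℕ)
    (hTs : ∀ T ∈ Ts, IsPermWord T.1 ∧ 1 ≤ T.1.length ∧ T.2.length = T.1.length ∧
      T.2.count false ≤ k)
    {w : List ℕ} (hw : InS Ts w) :
    ∀ τ : List ℕ, 0 < τ.length → ContainsPattern w τ →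
      ∃ u : List ℕ, u.length ≤ (τ.length - 1) * (k + 1) + 1 ∧ IsPermWord u ∧ InS Ts u ∧
        ContainsPattern u τ := by
  induction hw with
  | nil =>
    rintro τ hτ ⟨s, hsub, hiso⟩
    rw [List.sublist_nil] at hsub
    subst hsub
    have := hiso.1
    simp at this
    omega
  | single x =>
    rintro τ hτ ⟨s, hsub, hiso⟩
    rw [List.sublist_singleton] at hsub
    have hτ1 : τ.length = 1 := by
      rcases hsub with rfl | rfl
      · have := hiso.1; simp at this; omega
      · have := hiso.1; simp at this; omega
    refine ⟨[1], by simp, permword_one, InS.single 1, [1], List.Sublist.refl _, ?_⟩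
    refine ⟨by simp [hτ1], ?_⟩
    intro i j hi hj hi' hj'
    simp only [List.length_singleton] at hi hj
    have hi0 : i = 0 := by omega
    have hj0 : j = 0 := by omega
    subst hi0; subst hj0
    simp
  | join P B hT Ws Vs hlen hVs h2 horder hiso hrec hzero IH =>
    rintro τ hτ ⟨s, hsub, hsiso⟩
    obtain ⟨hP, hPlen1, hBP, hBk⟩ := hTs (P, B) hT
    simp only at hP hPlen1 hBP hBk
    have hWP : Ws.length = P.length := hlen
    have hWB : Ws.length = B.length := hlen.trans hBP.symm
    set PF : Fin Ws.length → ℕ := fun i => P.get (Fin.cast hWP i) with hPF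
    set BF : Fin Ws.length → Bool := fun i => B.get (Fin.cast hWB i) with hBF
    have hPnodup : P.Nodup := permword_nodup hP
    have hinj : Function.Injective PF := by
      intro a b hab
      have := (hPnodup.get_inj_iff).mp hab
      exact Fin.ext (by simpa using congrArg Fin.val this)
    have hPFmem : ∀ i, PF i ∈ P := by
      intro i
      rw [hPF]
      simp only [List.get_eq_getElem]
      exact List.getElem_mem _
    have hub : ∀ i, PF i ≤ Ws.length := by
      intro i
      have := (permword_mem hP (hPFmem i)).2
      omega
    have hlb : ∀ i, 1 ≤ PF i := fun i => (permword_mem hP (hPFmem i)).1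
    have hsurj : ∀ v, 1 ≤ v → v ≤ Ws.length → ∃ i, PF i = v := by
      intro v h1 h2
      obtain ⟨n, hn, hnv⟩ := permword_exists hP h1 (by omega)
      exact ⟨⟨n, by omega⟩, by simpa [hPF, List.get_eq_getElem] using hnv⟩
    -- decompose the copy of τ blockwise
    obtain ⟨ss, hssl, hsssub, hssfl⟩ := sublist_flatten_decomp Ws s hsub
    set sF : Fin Ws.length → List ℕ := fun i => ss.get (Fin.cast hssl.symm i) with hsF
    have hsF_ofFn : List.ofFn sF = ss := by
      apply List.ext_getElem (by simp [hssl])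
      intro n h1 h2
      simp [hsF, List.get_eq_getElem]
    have hsubWi : ∀ i : Fin Ws.length, (sF i).Sublist (Ws.get i) := by
      intro i
      have := hsssub i.val (by omega) i.isLt
      simpa [hsF, List.get_eq_getElem] using this
    have hLsum : ∑ i : Fin Ws.length, (sF i).length = τ.length := by
      have h1 : s.length = τ.length := hsiso.1
      have h2 : ss.flatten.length = ∑ i : Fin Ws.length, (sF i).length := by
        rw [← hsF_ofFn, List.length_flatten, List.map_ofFn, List.sum_ofFn]
        rfl
      rw [hssfl] at h2
      omega
    -- per-block choice of replacement permutation words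
    have hchoice : ∀ i : Fin Ws.length, ∃ u r : List ℕ,
        IsPermWord u ∧ InS Ts u ∧ r.Sublist u ∧ OrderIsoWord (sF i) r ∧
        ((sF i).length = 0 → u.length = (if BF i = false then 1 else 0)) ∧
        ((sF i).length ≠ 0 → u.length ≤ ((sF i).length - 1) * (k + 1) + 1) ∧
        (BF i = false → u.length = 1) := by
      intro i
      have hWV := hiso i.val i.isLt
      by_cases h0 : (sF i).length = 0
      · have h0' : sF i = [] := List.length_eq_zero_iff.mp h0
        by_cases hB : BF i = false
        · refine ⟨[1], [], permword_one, InS.single 1, List.nil_sublist _, ?_, ?_, ?_, ?_⟩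
          · rw [h0']; exact ⟨rfl, fun i j hi => by simp at hi⟩
          · intro; simp [hB]
          · intro h; exact absurd h0 h
          · intro; simp
        · refine ⟨[], [], ?_, InS.nil, List.nil_sublist _, ?_, ?_, ?_, ?_⟩
          · simp [IsPermWord]
          · rw [h0']; exact ⟨rfl, fun i j hi => by simp at hi⟩
          · intro; simp [hB]
          · intro h; exact absurd h0 h
          · intro h; exact absurd h hB
      · -- the block contains part of the copy
        obtain ⟨v', hv'sub, hv'iso⟩ := oiw_sublist hWV.2
            (by simpa [List.get_eq_getElem] using hsubWi i)
        obtain ⟨u, hu1, hu2, hu3, hu4⟩ := IH i.val (by omega) (sF i) (by omega)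
            ⟨v', hv'sub, oiw_symm hv'iso⟩
        obtain ⟨r, hrsub, hriso⟩ := hu4
        refine ⟨u, r, hu2, hu3, hrsub, oiw_symm hriso, fun h => absurd h h0, fun _ => hu1, ?_⟩
        intro hB
        have hW1 : (Ws.get i).length = 1 := by
          have := hzero i.val i.isLt (by omega) (by simpa [hBF, List.get_eq_getElem] using hB)
          simpa [List.get_eq_getElem] using this
        have hs1 : (sF i).length = 1 := by
          have := (hsubWi i).length_le
          omega
        have hr1 : r.length = 1 := by
          have := hriso.1
          omega
        have := hrsub.length_le
        have h1 : u.length ≤ (1 - 1) * (k + 1) + 1 := hs1 ▸ hu1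
        omega
    choose uF rF hup hins hrsub hriso h0len hposlen hfalse using hchoice
    set m : Fin Ws.length → ℕ := fun i => (uF i).length with hm
    set c : Fin Ws.length → ℕ := fun i => off PF m i with hc
    classical
    set S : Finset (Fin Ws.length) :=
      Finset.univ.filter (fun i => (sF i).length ≠ 0) with hSdef
    have hScard : 1 ≤ S.card := by
      rcases Nat.eq_zero_or_pos S.card with h | h
      · exfalso
        have hSempty := Finset.card_eq_zero.mp h
        have hza : ∀ i : Fin Ws.length, (sF i).length = 0 := by
          intro i
          by_contra hcon
          have : i ∈ S := Finset.mem_filter.mpr ⟨Finset.mem_univ i, hcon⟩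
          simp [hSempty] at this
        rw [Finset.sum_eq_zero (fun i _ => hza i)] at hLsum
        omega
      · omega
    rcases eq_or_lt_of_le hScard with hS1 | hS2
    · -- the whole copy lies in a single block: recurse directly
      obtain ⟨i0, hSi0⟩ := Finset.card_eq_one.mp hS1.symm
      have hall : ∀ j : Fin Ws.length, j ≠ i0 → (sF j).length = 0 := by
        intro j hj
        by_contra hcon
        have : j ∈ S := Finset.mem_filter.mpr ⟨Finset.mem_univ j, hcon⟩
        rw [hSi0] at this
        simp at this
        exact hj this
      have hseq : s = sF i0 := by
        have hmem : sF i0 ∈ List.ofFn sF := List.mem_ofFn.mpr ⟨i0, rfl⟩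
        have hsubfl : (sF i0).Sublist (List.ofFn sF).flatten :=
          List.sublist_flatten_of_mem hmem
        have hlen0 : (List.ofFn sF).flatten.length = (sF i0).length := by
          simp only [List.length_flatten, List.map_ofFn, List.sum_ofFn, Function.comp]
          exact Finset.sum_eq_single_of_mem i0 (Finset.mem_univ i0)
            (fun j _ hj => hall j hj)
        have heq := hsubfl.eq_of_length hlen0.symm
        rw [hsF_ofFn, hssfl] at heq
        exact heq.symm
      have hWV := hiso i0.val i0.isLt
      obtain ⟨v', hv'sub, hv'iso⟩ := oiw_sublist hWV.2
          (by simpa [List.get_eq_getElem] using hsubWi i0)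
      have hτiso : OrderIsoWord v' τ := oiw_trans (oiw_symm hv'iso) (hseq ▸ hsiso)
      exact IH i0.val (by omega) τ hτ ⟨v', hv'sub, hτiso⟩
    · -- at least two blocks: assemble a new small witness
      set Wn : Fin Ws.length → List ℕ := fun i => (uF i).map (fun x => c i + x) with hWn
      set w' : List ℕ := (List.ofFn Wn).flatten with hw'
      have hNlen : w'.length = ∑ i : Fin Ws.length, m i := by
        rw [hw', hWn, flatten_length]
      have hperm' : IsPermWord w' :=
        assembled_perm PF m uF hup (fun i => rfl) hinj hub hlb hsurj
      -- the copy of τ inside w'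
      set s'F : Fin Ws.length → List ℕ := fun i => (rF i).map (fun x => c i + x) with hs'F
      set s' : List ℕ := (List.ofFn s'F).flatten with hs'
      have hsub' : s'.Sublist w' := by
        apply flatten_sublist _ _ (by simp)
        intro i h1 h2
        simp only [List.getElem_ofFn]
        exact (hrsub _).map _
      have hrlen : ∀ i, (rF i).length = (sF i).length := fun i => ((hriso i).1).symm
      have hs'len : s'.length = τ.length := by
        rw [hs', List.length_flatten, List.map_ofFn, List.sum_ofFn, ← hLsum]
        apply Finset.sum_congr rfl
        intro i _
        simp [hs'F, hrlen i]
      -- block bounds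
      have hWnbound : ∀ i : Fin Ws.length, ∀ x ∈ Wn i, c i + 1 ≤ x ∧ x ≤ c i + m i := by
        intro i x hx
        rw [hWn] at hx
        simp only [List.mem_map] at hx
        obtain ⟨y, hy, rfl⟩ := hx
        have := permword_mem (hup i) hy
        have hmi : m i = (uF i).length := rfl
        omega
      have hs'Fbound : ∀ i : Fin Ws.length, ∀ x ∈ s'F i, c i + 1 ≤ x ∧ x ≤ c i + m i := by
        intro i x hx
        rw [hs'F] at hx
        simp only [List.mem_map] at hx
        obtain ⟨y, hy, rfl⟩ := hx
        have := permword_mem (hup i) ((hrsub i).subset hy)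
        have hmi : m i = (uF i).length := rfl
        omega
      have horder' : ∀ i j : Fin Ws.length, PF i < PF j →
          ∀ x ∈ Ws.get i, ∀ y ∈ Ws.get j, x < y := by
        intro i j hij x hx y hy
        have := horder j.val i.val j.isLt i.isLt
          (by simpa [hPF, List.get_eq_getElem] using hij)
        exact this y (by simpa [List.get_eq_getElem] using hy) x
          (by simpa [List.get_eq_getElem] using hx)
      have hmono : ∀ {i j : Fin Ws.length}, PF i < PF j → c i + m i ≤ c j :=
        fun h => off_mono PF m hinj h
      -- order isomorphism between s' and τ
      have hiso' : OrderIsoWord s' τ := by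
        apply oiw_trans _ hsiso
        have hlens' : s'.length = s.length := by rw [hs'len, hsiso.1]
        rw [oiw_iff_zc hlens']
        have hzipfl : s'.zip s = (List.ofFn (fun i => (s'F i).zip (sF i))).flatten := by
          rw [show s = (List.ofFn sF).flatten from by rw [hsF_ofFn, hssfl], hs']
          rw [zip_flatten _ _ (by simp) (fun i h1 h2 => by
            simp only [List.getElem_ofFn]
            simp [hs'F, hrlen])]
          congr 1
          apply List.ext_getElem (by simp [List.length_zipWith])
          intro n h1 h2
          simp only [List.getElem_zipWith, List.getElem_ofFn]
        intro p hp q hq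
        rw [hzipfl] at hp hq
        rw [List.mem_flatten] at hp hq
        obtain ⟨lp, hlp, hplp⟩ := hp
        obtain ⟨lq, hlq, hqlq⟩ := hq
        rw [List.mem_ofFn] at hlp hlq
        obtain ⟨i, rfl⟩ := hlp
        obtain ⟨j, rfl⟩ := hlq
        have hbiso : ∀ i : Fin Ws.length, OrderIsoWord (s'F i) (sF i) :=
          fun i => oiw_trans (oiw_shift (rF i) (c i)) (oiw_symm (hriso i))
        rcases eq_or_ne i j with rfl | hij
        · exact ((oiw_iff_zc (hbiso i).1).mp (hbiso i)) p hplp q hqlq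
        · have hp1 := (List.of_mem_zip hplp).1
          have hp2 := (List.of_mem_zip hplp).2
          have hq1 := (List.of_mem_zip hqlq).1
          have hq2 := (List.of_mem_zip hqlq).2
          have hp1b := hs'Fbound i _ hp1
          have hq1b := hs'Fbound j _ hq1
          have hp2W : p.2 ∈ Ws.get i := (hsubWi i).subset hp2
          have hq2W : q.2 ∈ Ws.get j := (hsubWi j).subset hq2
          have hPne : PF i ≠ PF j := fun h => hij (hinj h)
          rcases Nat.lt_or_ge (PF i) (PF j) with hlt | hge
          · have h1 : p.1 < q.1 := by have := hmono hlt; omega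
            have h2 : p.2 < q.2 := horder' i j hlt _ hp2W _ hq2W
            exact iff_of_true h1 h2
          · have hltj : PF j < PF i := by omega
            have h1 : ¬(p.1 < q.1) := by have := hmono hltj; omega
            have h2 : ¬(p.2 < q.2) := by
              have := horder' j i hltj _ hq2W _ hp2W
              omega
            exact iff_of_false h1 h2
      -- total length bound
      have hbound : w'.length ≤ (τ.length - 1) * (k + 1) + 1 := by
        rw [hNlen]
        have h6 : ∑ i : Fin Ws.length, m i = ∑ i ∈ S, m i + ∑ i ∈ Sᶜ, m i :=
          (Finset.sum_add_sum_compl S m).symm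
        have h1 : ∑ i ∈ S, (sF i).length = τ.length := by
          rw [← hLsum]
          apply Finset.sum_subset (Finset.subset_univ S)
          intro x _ hx
          by_contra hc
          exact hx (Finset.mem_filter.mpr ⟨Finset.mem_univ x, hc⟩)
        have hposS : ∀ i ∈ S, 1 ≤ (sF i).length := by
          intro i hi
          rw [hSdef, Finset.mem_filter] at hi
          omega
        set X : ℕ := ∑ i ∈ S, ((sF i).length - 1) with hX
        have h2 : X + S.card = τ.length := by
          have hcongr : ∑ i ∈ S, ((sF i).length - 1 + 1) = ∑ i ∈ S, (sF i).length :=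
            Finset.sum_congr rfl (fun i hi => by have := hposS i hi; omega)
          rw [Finset.sum_add_distrib] at hcongr
          simp only [Finset.sum_const, smul_eq_mul, mul_one] at hcongr
          rw [h1] at hcongr
          rw [hX]
          exact hcongr
        have h3 : ∑ i ∈ S, m i ≤ X * (k + 1) + S.card := by
          calc ∑ i ∈ S, m i ≤ ∑ i ∈ S, (((sF i).length - 1) * (k + 1) + 1) := by
                apply Finset.sum_le_sum
                intro i hi
                exact hposlen i (by have := hposS i hi; omega)
            _ = X * (k + 1) + S.card := by
                rw [Finset.sum_add_distrib, hX, Finset.sum_mul, Finset.card_eq_sum_ones S]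
        have h4 : ∑ i ∈ Sᶜ, m i ≤ k := by
          calc ∑ i ∈ Sᶜ, m i ≤ ∑ i ∈ Sᶜ, (if BF i = false then 1 else 0) := by
                apply Finset.sum_le_sum
                intro i hi
                have hi0 : (sF i).length = 0 := by
                  rw [Finset.mem_compl, hSdef, Finset.mem_filter] at hi
                  by_contra hc
                  exact hi ⟨Finset.mem_univ i, hc⟩
                exact le_of_eq (h0len i hi0)
            _ ≤ ∑ i : Fin Ws.length, (if BF i = false then 1 else 0) :=
                Finset.sum_le_sum_of_subset (Finset.subset_univ _)
            _ = (List.ofFn (fun j : Fin B.length => B.get j)).count false := by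
                rw [← sum_ind_false]
                exact Fintype.sum_equiv (finCongr hWB) _ _ (fun i => rfl)
            _ = B.count false := by
                rw [show (fun j : Fin B.length => B.get j) = B.get from rfl, List.ofFn_get]
            _ ≤ k := hBk
        have hd2 : 2 ≤ S.card := hS2
        set d : ℕ := S.card with hdd
        have e1 : τ.length - 1 = X + (d - 1) := by omega
        have e2 : (X + (d - 1)) * (k + 1) = X * (k + 1) + (d - 1) * k + (d - 1) := by ring
        have e3 : k ≤ (d - 1) * k := Nat.le_mul_of_pos_left k (by omega)
        rw [e1, e2]
        omega
      -- membership in InS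
      have hins' : InS Ts w' := by
        by_cases hN2 : 2 ≤ w'.length
        · rw [hw']
          refine InS.join P B hT (List.ofFn Wn) (List.ofFn uF) (by simp [hWP])
            (by simp) (by rw [← hw']; exact hN2) ?_ ?_ ?_ ?_
          · intro i j hi hj hPij x hx y hy
            simp only [List.length_ofFn] at hi hj
            simp only [List.getElem_ofFn] at hx hy
            have hij : PF ⟨j, hj⟩ < PF ⟨i, hi⟩ := by
              simpa [hPF, List.get_eq_getElem] using hPij
            have hx' := hWnbound ⟨i, hi⟩ x hx
            have hy' := hWnbound ⟨j, hj⟩ y hy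
            have := hmono hij
            omega
          · intro i hi
            simp only [List.length_ofFn] at hi
            constructor
            · simp only [List.getElem_ofFn]
              exact hup ⟨i, hi⟩
            · simp only [List.getElem_ofFn]
              exact oiw_shift (uF ⟨i, hi⟩) (c ⟨i, hi⟩)
          · intro i hi
            simp only [List.length_ofFn] at hi
            simp only [List.getElem_ofFn]
            exact hins ⟨i, hi⟩
          · intro i hi hb hBi
            simp only [List.length_ofFn] at hi
            simp only [List.getElem_ofFn]
            have : BF ⟨i, hi⟩ = false := by
              simpa [hBF, List.get_eq_getElem] using hBi
            simp [hWn]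
            exact hfalse ⟨i, hi⟩ this
        · have hge1 : 1 ≤ w'.length := by
            have := hsub'.length_le
            omega
          have hw'1 : w'.length = 1 := by omega
          have : w' = [1] := by
            have hp := hperm'
            rw [IsPermWord, hw'1] at hp
            simpa using List.perm_singleton.mp (by simpa using hp)
          rw [this]
          exact InS.single 1
      exact ⟨w', hbound, hperm', hins', s', hsub', hiso'⟩

end TPW

/-- Let `𝒯` be a finite set of templates each of whose binary strings
has at most `k` zeros, and let `σ` be a pattern of length `l > 0`.  If for some `n` the
set `S_{n,𝒯}` contains a permutation containing `σ` as a pattern, then for some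
`m ≤ (l-1)(k+1)+1` the set `S_{m,𝒯}` also contains a permutation containing `σ` as a
pattern. -/
theorem templates_pattern_small_witness
    (Ts : List (List ℕ × List Bool)) (k : ℕ)
    (hTs : ∀ T ∈ Ts, IsPermWord T.1 ∧ 1 ≤ T.1.length ∧ T.2.length = T.1.length ∧
      T.2.count false ≤ k)
    (σ : List ℕ) (hσ : IsPermWord σ) (l : ℕ) (hl : σ.length = l) (hl0 : 0 < l)
    (hex : ∃ n : ℕ, ∃ w ∈ Sset Ts n, ContainsPattern w σ) :
    ∃ m ≤ (l - 1) * (k + 1) + 1, ∃ w ∈ Sset Ts m, ContainsPattern w σ := by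
  obtain ⟨n, w, ⟨hwl, hwp, hwin⟩, hcont⟩ := hex
  obtain ⟨u, hub, hup, huin, hucont⟩ := TPW.key Ts k hTs hwin σ (by omega) hcont
  exact ⟨u.length, by rw [← hl]; exact hub, u, ⟨rfl, hup, huin⟩, hucont⟩
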